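/- Let Re > 0, let u : ℝ × ℝ³ → ℝ³ be twice continuously differentiable (jointly in (t,x)), let p̃ : ℝ × ℝ³ → ℝ be continuously differentiable, and let f : ℝ × ℝ³ → ℝ³ be continuous. Suppose that for all t ∈ ℝ and x ∈ Ω = [0,1]³ the Lamb-form Navier–Stokes equations hold: ∂ₜu − u × (curl u) + Re⁻¹ curl(curl u) + ∇(½|u|² + p̃) = f and div u = 0, together with the boundary conditions u × n = 0 and ½|u|² + p̃ = 0 on ∂Ω for all t. Then for every t ∈ ℝ the kinetic energy E(t) := ½ ∫_Ω |u(t,x)|² dx is differentiable in t with derivative E′(t) = ∫_Ω f(t,x) · u(t,x) dx − Re⁻¹ ∫_Ω |curl u(t,·)(x)|² dx; that is, the energy identity (d/dt) ½‖u‖² + Re⁻¹‖curl u‖² = (f, u) holds. -/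

import Mathlib

open MeasureTheory

noncomputable section

/-- Points of ℝ³, represented as functions `Fin 3 → ℝ`. -/
abbrev R3 : Type := Fin 3 → ℝ

/-- Partial derivative in the `i`-th coordinate direction. -/
noncomputable def pd (i : Fin 3) (f : R3 → ℝ) (x : R3) : ℝ :=
  fderiv ℝ f x (Pi.single i 1)

/-- Curl of a vector field on ℝ³. -/
noncomputable def vcurl (v : R3 → R3) (x : R3) : R3 :=
  ![pd 1 (fun y => v y 2) x - pd 2 (fun y => v y 1) x,
    pd 2 (fun y => v y 0) x - pd 0 (fun y => v y 2) x,
    pd 0 (fun y => v y 1) x - pd 1 (fun y => v y 0) x]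

/-- Divergence of a vector field on ℝ³. -/
noncomputable def vdiv (v : R3 → R3) (x : R3) : ℝ :=
  pd 0 (fun y => v y 0) x + pd 1 (fun y => v y 1) x + pd 2 (fun y => v y 2) x

/-- Gradient of a scalar field on ℝ³. -/
noncomputable def vgrad (f : R3 → ℝ) (x : R3) : R3 := fun i => pd i f x

/-- Euclidean dot product on ℝ³. -/
def dot3 (a b : R3) : ℝ := a 0 * b 0 + a 1 * b 1 + a 2 * b 2

/-- Cross product on ℝ³. -/
def cross3 (a b : R3) : R3 :=
  ![a 1 * b 2 - a 2 * b 1, a 2 * b 0 - a 0 * b 2, a 0 * b 1 - a 1 * b 0]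

/-- The closed unit cube Ω = [0,1]³. -/
def cube : Set R3 := Set.Icc 0 1

/-- `x` lies on one of the two faces of the cube orthogonal to direction `i`. -/
def onFace (x : R3) (i : Fin 3) : Prop := x i = 0 ∨ x i = 1

/-- `x` lies on the boundary ∂Ω of the cube. -/
def onBdry (x : R3) : Prop := x ∈ cube ∧ ∃ i : Fin 3, onFace x i

/-- Tangential boundary condition `v × n = 0` on ∂Ω: on each face of the cube
the two components of `v` tangential to that face vanish. -/
def TangentialBC (v : R3 → R3) : Prop :=
  ∀ x ∈ cube, ∀ i : Fin 3, onFace x i → ∀ j : Fin 3, j ≠ i → v x j = 0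

/-- Normal boundary condition `v · n = 0` on ∂Ω: on each face of the cube
the component of `v` normal to that face vanishes. -/
def NormalBC (v : R3 → R3) : Prop :=
  ∀ x ∈ cube, ∀ i : Fin 3, onFace x i → v x i = 0

/-- Time derivative ∂ₜu of a time-dependent vector field. -/
noncomputable def dtv (u : ℝ → R3 → R3) (t : ℝ) (x : R3) : R3 :=
  fun i => deriv (fun s => u s x i) t

/-!
Differentiating under the integral sign gives `E'(t) = ∫ u · ∂ₜu`, and dotting the momentum
equation with `u` removes the Lamb term, since `u · (u × curl u) = 0`. As `div u = 0`, the
pressure term is `u · ∇p = div (p u)`, whose integral vanishes by the divergence theorem because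
`p = 0` on `∂Ω`. For the viscous term, `u · curl ω = ω · curl u - div (u × ω)` with
`ω = curl u`, and `u × ω` has zero normal component on `∂Ω` because the tangential components
of `u` vanish there; hence `∫ u · curl curl u = ∫ |curl u|²`.
-/

open Function

theorem hasDerivAt_setIntegral_of_continuous {X E : Type*} [TopologicalSpace X] [T2Space X]
    [MeasurableSpace X] [OpensMeasurableSpace X] {μ : Measure X} [IsFiniteMeasureOnCompacts μ]
    [NormedAddCommGroup E] [NormedSpace ℝ E] [SecondCountableTopology E]
    {K : Set X} (hK : IsCompact K) {F F' : ℝ → X → E}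
    (hF : Continuous (uncurry F)) (hF' : Continuous (uncurry F'))
    (hderiv : ∀ s x, HasDerivAt (F · x) (F' s x) s) (t : ℝ) :
    HasDerivAt (fun s => ∫ x in K, F s x ∂μ) (∫ x in K, F' t x ∂μ) t := by
  have : IsFiniteMeasure (μ.restrict K) := ⟨by simpa using hK.measure_lt_top⟩
  obtain ⟨C, hC⟩ := ((isCompact_closedBall t 1).prod hK).exists_bound_of_continuousOn
    hF'.continuousOn
  refine (hasDerivAt_integral_of_dominated_loc_of_deriv_le (bound := fun _ => C)
    (Metric.ball_mem_nhds t one_pos) ?_ ?_ ?_ ?_ (integrable_const C) ?_).2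
  · exact .of_forall fun s => (hF.comp (Continuous.prodMk_right s)).aestronglyMeasurable
  · exact (hF.comp (Continuous.prodMk_right t)).continuousOn.integrableOn_compact hK
  · exact (hF'.comp (Continuous.prodMk_right t)).aestronglyMeasurable
  · refine (ae_restrict_iff' hK.measurableSet).2 (.of_forall fun x hx s hs => ?_)
    exact hC (s, x) ⟨Metric.ball_subset_closedBall hs, hx⟩
  · exact .of_forall fun x s _ => hderiv s x

theorem dot3_cross3_self_left (a b : R3) : dot3 a (cross3 a b) = 0 := by
  simp only [dot3, cross3, Matrix.cons_val_zero, Matrix.cons_val_one, Matrix.cons_val_two,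
    Matrix.head_cons, Matrix.tail_cons]
  ring

theorem dot3_eq_of_lamb_form {a d w c g h : R3} {ν : ℝ}
    (heq : d - cross3 a w + ν • c + g = h) :
    dot3 a d = dot3 h a - ν * dot3 a c - dot3 a g := by
  subst heq
  have := dot3_cross3_self_left a w
  simp only [dot3, Pi.add_apply, Pi.sub_apply, Pi.smul_apply, smul_eq_mul] at this ⊢
  linear_combination this

theorem dot3_comm (a b : R3) : dot3 a b = dot3 b a := by
  simp only [dot3]
  ring

theorem Continuous.dot3 {X : Type*} [TopologicalSpace X] {v w : X → R3}
    (hv : Continuous v) (hw : Continuous w) : Continuous fun x => dot3 (v x) (w x) := by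
  unfold _root_.dot3
  fun_prop

theorem ContDiff.dot3 {n : WithTop ℕ∞} {v w : R3 → R3} (hv : ContDiff ℝ n v)
    (hw : ContDiff ℝ n w) : ContDiff ℝ n fun x => dot3 (v x) (w x) := by
  unfold _root_.dot3
  fun_prop

theorem ContDiff.cross3 {n : WithTop ℕ∞} {v w : R3 → R3} (hv : ContDiff ℝ n v)
    (hw : ContDiff ℝ n w) : ContDiff ℝ n fun x => cross3 (v x) (w x) := by
  refine contDiff_pi.2 fun k => ?_
  fin_cases k <;>
    simp only [_root_.cross3, Fin.zero_eta, Fin.mk_one, Fin.reduceFinMk, Matrix.cons_val_zero,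
      Matrix.cons_val_one, Matrix.cons_val_two, Matrix.head_cons, Matrix.tail_cons] <;>
    fun_prop

theorem HasDerivAt.dot3 {v w : ℝ → R3} {v' w' : R3} {t : ℝ} (hv : HasDerivAt v v' t)
    (hw : HasDerivAt w w' t) :
    HasDerivAt (fun s => dot3 (v s) (w s)) (dot3 v' (w t) + dot3 (v t) w') t := by
  have hvi := hasDerivAt_pi.1 hv
  have hwi := hasDerivAt_pi.1 hw
  exact ((((hvi 0).fun_mul (hwi 0)).fun_add ((hvi 1).fun_mul (hwi 1))).fun_add
    ((hvi 2).fun_mul (hwi 2))).congr_deriv (by simp only [_root_.dot3]; ring)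

section TimeDerivative

variable {u : ℝ → R3 → R3} {t : ℝ} {x : R3}

theorem hasDerivAt_fderiv_uncurry (hu : DifferentiableAt ℝ (uncurry u) (t, x)) :
    HasDerivAt (fun s => u s x) (fderiv ℝ (uncurry u) (t, x) (1, 0)) t :=
  hu.hasFDerivAt.comp_hasDerivAt (f := fun s => (s, x)) t
    ((hasDerivAt_id t).prodMk (hasDerivAt_const t x))

theorem dtv_eq_fderiv_uncurry (hu : DifferentiableAt ℝ (uncurry u) (t, x)) :
    dtv u t x = fderiv ℝ (uncurry u) (t, x) (1, 0) :=
  funext fun i => (hasDerivAt_pi.1 (hasDerivAt_fderiv_uncurry hu) i).deriv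

theorem hasDerivAt_dtv (hu : DifferentiableAt ℝ (uncurry u) (t, x)) :
    HasDerivAt (fun s => u s x) (dtv u t x) t := by
  rw [dtv_eq_fderiv_uncurry hu]
  exact hasDerivAt_fderiv_uncurry hu

theorem continuous_uncurry_dtv (hu : ContDiff ℝ 1 (uncurry u)) :
    Continuous (uncurry (dtv u)) := by
  have hdtv : uncurry (dtv u) = fun p => fderiv ℝ (uncurry u) p (1, 0) :=
    funext fun p => dtv_eq_fderiv_uncurry (hu.differentiable one_ne_zero p)
  rw [hdtv]
  exact (hu.continuous_fderiv one_ne_zero).clm_apply continuous_const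

theorem hasDerivAt_integral_dot3_self (hu : ContDiff ℝ 1 (uncurry u)) {K : Set R3}
    (hK : IsCompact K) (t : ℝ) :
    HasDerivAt (fun s => ∫ x in K, dot3 (u s x) (u s x))
      (∫ x in K, 2 * dot3 (u t x) (dtv u t x)) t := by
  have hdot : Continuous (uncurry fun s x => dot3 (u s x) (u s x)) :=
    hu.continuous.dot3 hu.continuous
  have hdot' : Continuous (uncurry fun s x => 2 * dot3 (u s x) (dtv u s x)) :=
    continuous_const.mul (hu.continuous.dot3 (continuous_uncurry_dtv hu))
  refine hasDerivAt_setIntegral_of_continuous hK hdot hdot' (fun s x => ?_) t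
  have hux := hasDerivAt_dtv (hu.differentiable one_ne_zero (s, x))
  exact (hux.dot3 hux).congr_deriv (by simp only [dot3]; ring)

end TimeDerivative

section DifferentialOperators

variable {i : Fin 3} {g h P : R3 → ℝ} {v w : R3 → R3} {x : R3}

theorem pd_eq_fderiv_apply (hv : DifferentiableAt ℝ v x) (j : Fin 3) :
    pd i (fun y => v y j) x = fderiv ℝ v x (Pi.single i 1) j := by
  rw [pd, fderiv_apply hv]
  rfl

theorem pd_sub (hg : DifferentiableAt ℝ g x) (hh : DifferentiableAt ℝ h x) :
    pd i (fun y => g y - h y) x = pd i g x - pd i h x := by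
  rw [pd, fderiv_fun_sub hg hh]
  rfl

theorem pd_mul (hg : DifferentiableAt ℝ g x) (hh : DifferentiableAt ℝ h x) :
    pd i (fun y => g y * h y) x = g x * pd i h x + pd i g x * h x := by
  rw [pd, fderiv_fun_mul hg hh]
  simp [pd, mul_comm]

theorem contDiff_pd {m n : WithTop ℕ∞} (hg : ContDiff ℝ n g) (hmn : m + 1 ≤ n) (i : Fin 3) :
    ContDiff ℝ m (pd i g) :=
  (hg.fderiv_right hmn).clm_apply contDiff_const

theorem contDiff_vcurl {m n : WithTop ℕ∞} (hv : ContDiff ℝ n v) (hmn : m + 1 ≤ n) :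
    ContDiff ℝ m (vcurl v) := by
  have hpd : ∀ i j : Fin 3, ContDiff ℝ m (pd i fun y => v y j) := fun i j =>
    contDiff_pd (contDiff_pi.1 hv j) hmn i
  refine contDiff_pi.2 fun k => ?_
  fin_cases k <;> exact (hpd _ _).sub (hpd _ _)

theorem continuous_vcurl (hv : ContDiff ℝ 1 v) : Continuous (vcurl v) :=
  (contDiff_vcurl hv (zero_add 1).le).continuous

theorem continuous_vdiv (hv : ContDiff ℝ 1 v) : Continuous (vdiv v) := by
  have hpd : ∀ i : Fin 3, Continuous (pd i fun y => v y i) := fun i =>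
    (contDiff_pd (contDiff_pi.1 hv i) (zero_add 1).le i).continuous
  exact ((hpd 0).add (hpd 1)).add (hpd 2)

theorem continuous_vgrad (hP : ContDiff ℝ 1 P) : Continuous (vgrad P) :=
  continuous_pi fun i => (contDiff_pd hP (zero_add 1).le i).continuous

theorem vdiv_mul (hP : DifferentiableAt ℝ P x) (hv : DifferentiableAt ℝ v x) :
    vdiv (fun y i => P y * v y i) x = dot3 (vgrad P x) (v x) + P x * vdiv v x := by
  have hvj : ∀ j : Fin 3, DifferentiableAt ℝ (fun y => v y j) x := fun j =>
    differentiableAt_pi.1 hv j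
  rw [vdiv, pd_mul hP (hvj 0), pd_mul hP (hvj 1), pd_mul hP (hvj 2)]
  simp only [dot3, vgrad, vdiv]
  ring

theorem vdiv_cross3 (hv : DifferentiableAt ℝ v x) (hw : DifferentiableAt ℝ w x) :
    vdiv (fun y => cross3 (v y) (w y)) x = dot3 (w x) (vcurl v x) - dot3 (v x) (vcurl w x) := by
  have hvj : ∀ j : Fin 3, DifferentiableAt ℝ (fun y => v y j) x := fun j =>
    differentiableAt_pi.1 hv j
  have hwj : ∀ j : Fin 3, DifferentiableAt ℝ (fun y => w y j) x := fun j =>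
    differentiableAt_pi.1 hw j
  simp only [vdiv, cross3, Matrix.cons_val_zero, Matrix.cons_val_one, Matrix.cons_val_two,
    Matrix.head_cons, Matrix.tail_cons]
  rw [pd_sub ((hvj 1).fun_mul (hwj 2)) ((hvj 2).fun_mul (hwj 1)),
    pd_sub ((hvj 2).fun_mul (hwj 0)) ((hvj 0).fun_mul (hwj 2)),
    pd_sub ((hvj 0).fun_mul (hwj 1)) ((hvj 1).fun_mul (hwj 0)),
    pd_mul (hvj 1) (hwj 2), pd_mul (hvj 2) (hwj 1), pd_mul (hvj 2) (hwj 0),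
    pd_mul (hvj 0) (hwj 2), pd_mul (hvj 0) (hwj 1), pd_mul (hvj 1) (hwj 0)]
  simp only [dot3, vcurl, Matrix.cons_val_zero, Matrix.cons_val_one, Matrix.cons_val_two,
    Matrix.head_cons, Matrix.tail_cons]
  ring

end DifferentialOperators

theorem measurableSet_cube : MeasurableSet cube := measurableSet_Icc

theorem isCompact_cube : IsCompact cube := isCompact_Icc

theorem Continuous.integrableOn_cube {g : R3 → ℝ} (hg : Continuous g) : IntegrableOn g cube :=
  hg.integrableOn_Icc

section IntegrationByParts

variable {P : R3 → ℝ} {v w : R3 → R3}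

theorem integral_vdiv_eq_zero (hv : ContDiff ℝ 1 v) (hbc : NormalBC v) :
    ∫ x in cube, vdiv v x = 0 := by
  have hdv : Differentiable ℝ v := hv.differentiable one_ne_zero
  have hvdiv : ∀ x, vdiv v x = ∑ i : Fin 3, fderiv ℝ v x (Pi.single i 1) i := fun x => by
    simp only [vdiv, Fin.sum_univ_three, pd_eq_fderiv_apply (hdv x)]
  have hface : ∀ (i : Fin 3) (c : ℝ), c = 0 ∨ c = 1 →
      ∫ y in Set.Icc ((0 : R3) ∘ i.succAbove) ((1 : R3) ∘ i.succAbove),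
        v (i.insertNth c y) i = 0 := fun i c hc =>
    setIntegral_eq_zero_of_forall_eq_zero fun y hy => hbc _
      (Fin.insertNth_mem_Icc.2 ⟨by rcases hc with rfl | rfl <;> simp, hy⟩) i (by simpa [onFace])
  have hdivthm := integral_divergence_of_hasFDerivAt_off_countable (n := 2) (0 : R3) 1
    (fun _ => zero_le_one) v (fderiv ℝ v) ∅ Set.countable_empty hv.continuous.continuousOn
    (fun x _ => (hdv x).hasFDerivAt)
    (by simpa only [← hvdiv] using (continuous_vdiv hv).integrableOn_Icc)
  simp only [Pi.zero_apply, Pi.one_apply, hface _ 0 (.inl rfl), hface _ 1 (.inr rfl), sub_zero,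
    Finset.sum_const_zero, ← hvdiv] at hdivthm
  exact hdivthm

theorem normalBC_mul (hP : ∀ x, onBdry x → P x = 0) (v : R3 → R3) :
    NormalBC fun x i => P x * v x i :=
  fun x hx i hi => by simp [hP x ⟨hx, i, hi⟩]

theorem normalBC_cross3 (hv : TangentialBC v) (w : R3 → R3) :
    NormalBC fun x => cross3 (v x) (w x) := by
  intro x hx i hi
  have hvx := hv x hx i hi
  fin_cases i
  · simp [cross3, hvx 1 (by decide), hvx 2 (by decide)]
  · simp [cross3, hvx 0 (by decide), hvx 2 (by decide)]
  · simp [cross3, hvx 0 (by decide), hvx 1 (by decide)]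

theorem integral_dot3_vgrad_eq_zero (hv : ContDiff ℝ 1 v) (hP : ContDiff ℝ 1 P)
    (hdiv : ∀ x ∈ cube, vdiv v x = 0) (hP0 : ∀ x, onBdry x → P x = 0) :
    ∫ x in cube, dot3 (v x) (vgrad P x) = 0 := by
  have hdivPv : ∀ x ∈ cube, dot3 (v x) (vgrad P x) = vdiv (fun y i => P y * v y i) x :=
    fun x hx => by
      rw [vdiv_mul (hP.differentiable one_ne_zero x) (hv.differentiable one_ne_zero x),
        hdiv x hx, mul_zero, add_zero, dot3_comm]
  rw [setIntegral_congr_fun measurableSet_cube hdivPv]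
  exact integral_vdiv_eq_zero (contDiff_pi.2 fun i => hP.mul (contDiff_pi.1 hv i))
    (normalBC_mul hP0 v)

theorem integral_dot3_vcurl_comm (hv : ContDiff ℝ 1 v) (hw : ContDiff ℝ 1 w)
    (hbc : TangentialBC v) :
    ∫ x in cube, dot3 (v x) (vcurl w x) = ∫ x in cube, dot3 (w x) (vcurl v x) := by
  have hsplit : ∀ x ∈ cube, dot3 (v x) (vcurl w x)
      = dot3 (w x) (vcurl v x) - vdiv (fun y => cross3 (v y) (w y)) x := fun x _ => by
    rw [vdiv_cross3 (hv.differentiable one_ne_zero x) (hw.differentiable one_ne_zero x)]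
    ring
  have hcross := hv.cross3 hw
  rw [setIntegral_congr_fun measurableSet_cube hsplit,
    integral_sub (hw.continuous.dot3 (continuous_vcurl hv)).integrableOn_cube
      (continuous_vdiv hcross).integrableOn_cube,
    integral_vdiv_eq_zero hcross (normalBC_cross3 hbc w), sub_zero]

end IntegrationByParts

theorem integral_dot3_eq_of_lamb_form {ν : ℝ} {v d g : R3 → R3} {P : R3 → ℝ}
    (hv : ContDiff ℝ 2 v) (hP : ContDiff ℝ 1 P) (hg : Continuous g)
    (hmom : ∀ x ∈ cube, d x - cross3 (v x) (vcurl v x) + ν • vcurl (vcurl v) x + vgrad P x = g x)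
    (hdiv : ∀ x ∈ cube, vdiv v x = 0) (hbc : TangentialBC v) (hP0 : ∀ x, onBdry x → P x = 0) :
    ∫ x in cube, dot3 (v x) (d x)
      = (∫ x in cube, dot3 (g x) (v x)) - ν * ∫ x in cube, dot3 (vcurl v x) (vcurl v x) := by
  have hv1 : ContDiff ℝ 1 v := hv.of_le one_le_two
  have hω : ContDiff ℝ 1 (vcurl v) := contDiff_vcurl hv one_add_one_eq_two.le
  have hforce := (hg.dot3 hv1.continuous).integrableOn_cube
  have hvisc := ((hv1.continuous.dot3 (continuous_vcurl hω)).integrableOn_cube).const_mul ν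
  have hpress := (hv1.continuous.dot3 (continuous_vgrad hP)).integrableOn_cube
  calc ∫ x in cube, dot3 (v x) (d x)
      = ∫ x in cube, (dot3 (g x) (v x) - ν * dot3 (v x) (vcurl (vcurl v) x)
          - dot3 (v x) (vgrad P x)) :=
        setIntegral_congr_fun measurableSet_cube fun x hx => dot3_eq_of_lamb_form (hmom x hx)
    _ = (∫ x in cube, dot3 (g x) (v x)) - ν * (∫ x in cube, dot3 (v x) (vcurl (vcurl v) x))
          - ∫ x in cube, dot3 (v x) (vgrad P x) := by
        rw [integral_sub (hforce.sub' hvisc) hpress, integral_sub hforce hvisc,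
          integral_const_mul]
    _ = _ := by
        rw [integral_dot3_vcurl_comm hv1 hω hbc, integral_dot3_vgrad_eq_zero hv1 hP hdiv hP0,
          sub_zero]

theorem navier_stokes_energy_identity_general (Re : ℝ)
    (u : ℝ → R3 → R3) (pt : ℝ → R3 → ℝ) (f : ℝ → R3 → R3)
    (hu : ContDiff ℝ 2 (Function.uncurry u))
    (hp : ContDiff ℝ 1 (Function.uncurry pt))
    (hf : Continuous (Function.uncurry f))
    (hmom : ∀ t : ℝ, ∀ x ∈ cube,
      dtv u t x - cross3 (u t x) (vcurl (u t) x) + Re⁻¹ • vcurl (vcurl (u t)) x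
        + vgrad (fun y => (1 / 2) * dot3 (u t y) (u t y) + pt t y) x = f t x)
    (hdiv : ∀ t : ℝ, ∀ x ∈ cube, vdiv (u t) x = 0)
    (hbcu : ∀ t : ℝ, TangentialBC (u t))
    (hbcp : ∀ t : ℝ, ∀ x : R3, onBdry x →
      (1 / 2) * dot3 (u t x) (u t x) + pt t x = 0) :
    ∀ t : ℝ,
      HasDerivAt (fun s => (1 / 2) * ∫ x in cube, dot3 (u s x) (u s x))
        ((∫ x in cube, dot3 (f t x) (u t x))
          - Re⁻¹ * ∫ x in cube, dot3 (vcurl (u t) x) (vcurl (u t) x)) t := by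
  intro t
  have hslice : ContDiff ℝ 2 (u t) := hu.comp (contDiff_const.prodMk contDiff_id)
  have hP : ContDiff ℝ 1 fun y => (1 / 2) * dot3 (u t y) (u t y) + pt t y :=
    (contDiff_const.mul ((hslice.dot3 hslice).of_le one_le_two)).add
      (hp.comp (contDiff_const.prodMk contDiff_id))
  have hbalance := integral_dot3_eq_of_lamb_form (g := f t) hslice hP
    (hf.comp (Continuous.prodMk_right t)) (hmom t) (hdiv t) (hbcu t) (hbcp t)
  have hE := (hasDerivAt_integral_dot3_self (hu.of_le one_le_two) isCompact_cube t).const_mul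
    (1 / 2 : ℝ)
  refine hE.congr_deriv ?_
  rw [integral_const_mul, hbalance]
  ring

/-- Energy identity for the Lamb-form Navier–Stokes equations on the unit cube:
(d/dt) ½‖u‖² + Re⁻¹‖curl u‖² = (f, u). -/
theorem navier_stokes_energy_identity (Re : ℝ) (hRe : 0 < Re)
    (u : ℝ → R3 → R3) (pt : ℝ → R3 → ℝ) (f : ℝ → R3 → R3)
    (hu : ContDiff ℝ 2 (Function.uncurry u))
    (hp : ContDiff ℝ 1 (Function.uncurry pt))
    (hf : Continuous (Function.uncurry f))
    (hmom : ∀ t : ℝ, ∀ x ∈ cube,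
      dtv u t x - cross3 (u t x) (vcurl (u t) x) + Re⁻¹ • vcurl (vcurl (u t)) x
        + vgrad (fun y => (1 / 2) * dot3 (u t y) (u t y) + pt t y) x = f t x)
    (hdiv : ∀ t : ℝ, ∀ x ∈ cube, vdiv (u t) x = 0)
    (hbcu : ∀ t : ℝ, TangentialBC (u t))
    (hbcp : ∀ t : ℝ, ∀ x : R3, onBdry x →
      (1 / 2) * dot3 (u t x) (u t x) + pt t x = 0) :
    ∀ t : ℝ,
      HasDerivAt (fun s => (1 / 2) * ∫ x in cube, dot3 (u s x) (u s x))
        ((∫ x in cube, dot3 (f t x) (u t x))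
          - Re⁻¹ * ∫ x in cube, dot3 (vcurl (u t) x) (vcurl (u t) x)) t :=
  navier_stokes_energy_identity_general Re u pt f hu hp hf hmom hdiv hbcu hbcp
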